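/- arXiv:1805.06178 — 4 statements merged into one kernel-verified Lean document; each statement's English description precedes it below -/
import Mathlib

section
/- For all but countably many φ in (0, π), lim_{n→∞} (1/n) Σ_{t=1}^n cos(φ t²) = 0 and lim_{n→∞} (1/n) Σ_{t=1}^n sin(φ t²) = 0. -/
/-!
Van der Corput differencing. Summing `u : ℤ → ℂ` over the windows `[t, t + H)` that meet `[1, n]`
and applying Cauchy–Schwarz gives `H² ‖∑_{s ≤ n} u s‖² ≤ (n + H) ∑_{h, h' < H} ‖C_n(h - h')‖`,
where `C_n(d)` is the lag-`d` autocorrelation of `u` on `[1, n]`. When `‖u‖ ≤ 1` and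
`C_n(d) = o(n)` for every `d ≠ 0`, the right side is at most `4 H n²` for large `n`, and letting
`H → ∞` shows that the averages of `u` tend to `0`.

For `u s = exp (i φ s²)`, `C_n(d)` is `exp (i φ d²)` times a geometric sum of ratio `exp (2 i φ d)`,
which stays bounded in `n` unless `φ d / π ∈ ℤ`. Hence every `φ` outside the countable set `ℚ π`
works, and the cosine and sine sums are the real and imaginary parts.
-/

open Filter Finset ComplexConjugate Topology

lemma norm_sum_Icc_zpow_le (z : Circle) (hz : z ≠ 1) (a b : ℤ) :
    ‖∑ t ∈ Icc a b, (z : ℂ) ^ t‖ ≤ 2 / ‖1 - (z : ℂ)‖ := by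
  have hz' : (z : ℂ) ≠ 1 := Circle.coe_eq_one.not.mpr hz
  rw [Int.Icc_eq_finset_map, sum_map]
  simp only [Function.Embedding.trans_apply, Nat.castEmbedding_apply, addLeftEmbedding_apply,
    zpow_add₀ z.coe_ne_zero, zpow_natCast, ← mul_sum, geom_sum_eq hz']
  rw [norm_mul, norm_zpow, Circle.norm_coe, one_zpow, one_mul, norm_div, ← norm_neg ((z : ℂ) - 1),
    neg_sub]
  gcongr
  calc ‖(z : ℂ) ^ (b + 1 - a).toNat - 1‖ ≤ ‖(z : ℂ) ^ (b + 1 - a).toNat‖ + ‖(1 : ℂ)‖ :=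
        norm_sub_le _ _
    _ = 2 := by rw [norm_pow, Circle.norm_coe]; norm_num

lemma sum_Icc_comp_add_of_support {M : Type*} [AddCommMonoid M] {F : ℤ → M} {n H : ℕ} {h : ℤ}
    (hF : ∀ s ∉ Icc (1 : ℤ) n, F s = 0) (h₀ : 0 ≤ h) (hH : h < H) :
    ∑ t ∈ Icc (2 - (H : ℤ)) n, F (t + h) = ∑ s ∈ Icc (1 : ℤ) n, F s := by
  have hshift : ∑ t ∈ Icc (2 - (H : ℤ)) n, F (t + h) = ∑ s ∈ Icc (2 - H + h) (n + h), F s := by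
    rw [← map_add_right_Icc, sum_map]
    rfl
  rw [hshift]
  exact (sum_subset (Icc_subset_Icc (by omega) (by omega)) fun s _ hs ↦ hF s hs).symm

lemma sum_Icc_natCast {M : Type*} [AddCommMonoid M] (F : ℤ → M) (a b : ℕ) :
    ∑ t ∈ Icc a b, F t = ∑ s ∈ Icc (a : ℤ) b, F s := by
  have hmap : (Icc a b).map (Nat.castEmbedding : ℕ ↪ ℤ) = Icc (a : ℤ) b := by
    ext s
    simp only [Finset.mem_map, mem_Icc, Nat.castEmbedding_apply]
    constructor
    · rintro ⟨t, ht, rfl⟩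
      omega
    · exact fun hs ↦ ⟨s.toNat, by omega, by omega⟩
  rw [← hmap, sum_map]
  rfl

lemma sq_norm_sum_eq_re_sum_sum_mul_conj {ι : Type*} (s : Finset ι) (w : ι → ℂ) :
    ‖∑ i ∈ s, w i‖ ^ 2 = (∑ i ∈ s, ∑ j ∈ s, w i * conj (w j)).re := by
  rw [← sum_mul_sum, ← map_sum, Complex.mul_conj, Complex.normSq_eq_norm_sq, Complex.ofReal_re]

noncomputable def autocorrelation (u : ℤ → ℂ) (n : ℕ) (d : ℤ) : ℂ :=
  ∑ s ∈ Icc (1 : ℤ) n with s + d ∈ Icc (1 : ℤ) n, u (s + d) * conj (u s)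

section Truncation

variable (u : ℤ → ℂ) (n : ℕ)

noncomputable def truncation (s : ℤ) : ℂ := if s ∈ Icc (1 : ℤ) n then u s else 0

variable {u n}

lemma truncation_eq_zero {s : ℤ} (hs : s ∉ Icc (1 : ℤ) n) : truncation u n s = 0 := if_neg hs

lemma sum_truncation_window {H : ℕ} :
    ∑ t ∈ Icc (2 - (H : ℤ)) n, ∑ h ∈ range H, truncation u n (t + h) =
      H * ∑ s ∈ Icc (1 : ℤ) n, u s := by
  rw [sum_comm, sum_congr rfl fun h hh ↦ sum_Icc_comp_add_of_support
    (fun s hs ↦ truncation_eq_zero hs) (Int.natCast_nonneg h) (by simpa using hh)]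
  simp only [sum_const, card_range, nsmul_eq_mul, truncation, sum_ite_mem, inter_self]

lemma sum_truncation_window_mul_conj {H h h' : ℕ} (hh' : h' < H) :
    ∑ t ∈ Icc (2 - (H : ℤ)) n, truncation u n (t + h) * conj (truncation u n (t + h')) =
      autocorrelation u n (h - h') := by
  have key := sum_Icc_comp_add_of_support (F := fun s ↦
    truncation u n (s + (h - h')) * conj (truncation u n s)) (n := n)
    (fun s hs ↦ by simp [truncation_eq_zero hs]) (Int.natCast_nonneg h') (by exact_mod_cast hh')
  have hlag (t : ℤ) : t + h' + (h - h') = t + h := by ring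
  simp only [hlag] at key
  rw [key, autocorrelation, sum_filter]
  refine sum_congr rfl fun s hs ↦ ?_
  simp only [truncation, if_pos hs, ite_mul, zero_mul]

end Truncation

theorem vanDerCorput_inequality (u : ℤ → ℂ) (n H : ℕ) :
    (H : ℝ) ^ 2 * ‖∑ s ∈ Icc (1 : ℤ) n, u s‖ ^ 2 ≤
      (n + H) * ∑ h ∈ range H, ∑ h' ∈ range H, ‖autocorrelation u n (h - h')‖ := by
  -- the windows `[t, t + H)` meeting `[1, n]`
  set I := Icc (2 - (H : ℤ)) n
  set w : ℤ → ℕ → ℂ := fun t h ↦ truncation u n (t + h)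
  have hcard : (#I : ℝ) ≤ n + H := by
    have : #I ≤ n + H := by simp only [I, Int.card_Icc]; omega
    exact_mod_cast this
  have hcorr : ∑ t ∈ I, ‖∑ h ∈ range H, w t h‖ ^ 2 ≤
      ∑ h ∈ range H, ∑ h' ∈ range H, ‖autocorrelation u n (h - h')‖ := by
    calc ∑ t ∈ I, ‖∑ h ∈ range H, w t h‖ ^ 2
        = (∑ h ∈ range H, ∑ h' ∈ range H, autocorrelation u n (h - h')).re := by
          simp only [sq_norm_sum_eq_re_sum_sum_mul_conj, ← Complex.re_sum]
          rw [sum_comm]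
          refine congrArg _ (sum_congr rfl fun h _ ↦ ?_)
          rw [sum_comm]
          exact sum_congr rfl fun h' hh' ↦ sum_truncation_window_mul_conj (mem_range.1 hh')
      _ ≤ ‖∑ h ∈ range H, ∑ h' ∈ range H, autocorrelation u n (h - h')‖ := Complex.re_le_norm _
      _ ≤ _ := (norm_sum_le _ _).trans (sum_le_sum fun _ _ ↦ norm_sum_le _ _)
  calc (H : ℝ) ^ 2 * ‖∑ s ∈ Icc (1 : ℤ) n, u s‖ ^ 2 = ‖∑ t ∈ I, ∑ h ∈ range H, w t h‖ ^ 2 := by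
        rw [sum_truncation_window, norm_mul, Complex.norm_natCast, mul_pow]
    _ ≤ (∑ t ∈ I, ‖∑ h ∈ range H, w t h‖) ^ 2 := by gcongr; exact norm_sum_le _ _
    _ ≤ #I * ∑ t ∈ I, ‖∑ h ∈ range H, w t h‖ ^ 2 := sq_sum_le_card_mul_sum_sq
    _ ≤ (n + H) * ∑ h ∈ range H, ∑ h' ∈ range H, ‖autocorrelation u n (h - h')‖ := by
        gcongr

section Asymptotics

variable {u : ℤ → ℂ}

lemma norm_autocorrelation_le (hu : ∀ s, ‖u s‖ ≤ 1) (n : ℕ) (d : ℤ) :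
    ‖autocorrelation u n d‖ ≤ n := by
  refine (norm_sum_le_of_le (n := fun _ ↦ (1 : ℝ)) _ fun s _ ↦ ?_).trans ?_
  · rw [norm_mul, RCLike.norm_conj]
    exact mul_le_one₀ (hu _) (norm_nonneg _) (hu _)
  · rw [sum_const, nsmul_one, Nat.cast_le]
    exact (card_filter_le _ _).trans (by simp)

lemma sum_sum_norm_autocorrelation_le (hu : ∀ s, ‖u s‖ ≤ 1) {n : ℕ} (hn : 0 < n) (H : ℕ) :
    ∑ h ∈ range H, ∑ h' ∈ range H, ‖autocorrelation u n (h - h')‖ ≤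
      n * (H + ∑ h ∈ range H, ∑ h' ∈ range H,
        if h = h' then 0 else ‖autocorrelation u n (h - h')‖ / n) := by
  have hterm (h h' : ℕ) : ‖autocorrelation u n (h - h')‖ ≤
      n * ((if h = h' then 1 else 0) +
        if h = h' then 0 else ‖autocorrelation u n (h - h')‖ / n) := by
    split_ifs
    · simpa using norm_autocorrelation_le hu n _
    · rw [zero_add, mul_div_cancel₀ _ (by positivity)]
  refine (sum_le_sum fun h _ ↦ sum_le_sum fun h' _ ↦ hterm h h').trans_eq ?_
  simp only [← mul_sum, sum_add_distrib, sum_ite_eq, mem_range]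
  congr 2
  exact (sum_congr rfl fun h hh ↦ if_pos (mem_range.1 hh)).trans (by simp)

lemma eventually_mul_sq_norm_sum_le (hu : ∀ s, ‖u s‖ ≤ 1)
    (hcorr : ∀ d ≠ 0, Tendsto (fun n : ℕ ↦ ‖autocorrelation u n d‖ / n) atTop (𝓝 0))
    {H : ℕ} (hH : 0 < H) :
    ∀ᶠ n : ℕ in atTop, H * ‖∑ s ∈ Icc (1 : ℤ) n, u s‖ ^ 2 ≤ 4 * n ^ 2 := by
  set offdiag : ℕ → ℝ := fun n ↦ ∑ h ∈ range H, ∑ h' ∈ range H,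
    if h = h' then 0 else ‖autocorrelation u n (h - h')‖ / n
  have hoff : Tendsto offdiag atTop (𝓝 0) := by
    have hterm (h h' : ℕ) : Tendsto (fun n : ℕ ↦
        if h = h' then 0 else ‖autocorrelation u n (h - h')‖ / n) atTop (𝓝 0) := by
      split_ifs with hhh
      · exact tendsto_const_nhds
      · exact hcorr _ (sub_ne_zero.2 (Nat.cast_injective.ne hhh))
    simpa using tendsto_finsetSum (range H) fun h _ ↦ tendsto_finsetSum (range H) fun h' _ ↦
      hterm h h'
  filter_upwards [hoff.eventually (gt_mem_nhds (Nat.cast_pos.2 hH)), eventually_ge_atTop H]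
    with n hsmall hHn
  have hn : 0 < n := hH.trans_le hHn
  have hHn' : (H : ℝ) ≤ n := by exact_mod_cast hHn
  have : (H : ℝ) * (H * ‖∑ s ∈ Icc (1 : ℤ) n, u s‖ ^ 2) ≤ H * (4 * n ^ 2) := by
    calc _ = (H : ℝ) ^ 2 * ‖∑ s ∈ Icc (1 : ℤ) n, u s‖ ^ 2 := by ring
      _ ≤ _ := vanDerCorput_inequality u n H
      _ ≤ (n + n) * (n * (H + H)) := by
          gcongr
          exact (sum_sum_norm_autocorrelation_le hu hn H).trans (by gcongr)
      _ = H * (4 * n ^ 2) := by ring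
  exact le_of_mul_le_mul_left this (by positivity)

theorem tendsto_norm_sum_div_of_autocorrelation (hu : ∀ s, ‖u s‖ ≤ 1)
    (hcorr : ∀ d ≠ 0, Tendsto (fun n : ℕ ↦ ‖autocorrelation u n d‖ / n) atTop (𝓝 0)) :
    Tendsto (fun n : ℕ ↦ ‖∑ s ∈ Icc (1 : ℤ) n, u s‖ / n) atTop (𝓝 0) := by
  refine tendsto_order.2 ⟨fun a ha ↦ .of_forall fun n ↦ ha.trans_le (by positivity), fun ε hε ↦ ?_⟩
  obtain ⟨H, hH⟩ := exists_nat_gt (4 / ε ^ 2)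
  have hHε : 4 < H * ε ^ 2 := (div_lt_iff₀ (by positivity)).1 hH
  have hH₀ : 0 < H := by exact_mod_cast (div_pos four_pos (by positivity)).trans hH
  filter_upwards [eventually_mul_sq_norm_sum_le hu hcorr hH₀, eventually_gt_atTop 0]
    with n hbound hn
  rw [div_lt_iff₀ (by positivity)]
  refine lt_of_pow_lt_pow_left₀ 2 (by positivity) (lt_of_mul_lt_mul_left ?_ H.cast_nonneg)
  calc (H : ℝ) * ‖∑ s ∈ Icc (1 : ℤ) n, u s‖ ^ 2 ≤ 4 * n ^ 2 := hbound
    _ < H * ε ^ 2 * n ^ 2 := by gcongr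
    _ = H * (ε * n) ^ 2 := by ring

end Asymptotics

lemma autocorrelation_circleExp_sq (φ : ℝ) (n : ℕ) (d : ℤ) :
    autocorrelation (fun s ↦ Circle.exp (φ * s ^ 2)) n d =
      Circle.exp (φ * d ^ 2) *
        ∑ s ∈ Icc (max 1 (1 - d)) (min n (n - d)), (Circle.exp (2 * φ * d) : ℂ) ^ s := by
  have hrange : {s ∈ Icc (1 : ℤ) n | s + d ∈ Icc (1 : ℤ) n} =
      Icc (max 1 (1 - d)) (min n (n - d)) := by
    ext s
    simp only [mem_filter, mem_Icc, le_min_iff, max_le_iff]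
    omega
  rw [autocorrelation, hrange, mul_sum]
  refine sum_congr rfl fun s _ ↦ ?_
  rw [← Circle.coe_inv_eq_conj, ← Circle.coe_zpow, ← Circle.coe_mul, ← Circle.coe_mul,
    ← Circle.exp_neg, ← Circle.exp_add, ← Circle.exp_intCast_mul, ← Circle.exp_add]
  congr 2
  push_cast
  ring

lemma norm_autocorrelation_circleExp_sq_le (φ : ℝ) (n : ℕ) {d : ℤ}
    (hd : Circle.exp (2 * φ * d) ≠ 1) :
    ‖autocorrelation (fun s ↦ Circle.exp (φ * s ^ 2)) n d‖ ≤
      2 / ‖1 - (Circle.exp (2 * φ * d) : ℂ)‖ := by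
  rw [autocorrelation_circleExp_sq, norm_mul, Circle.norm_coe, one_mul]
  exact norm_sum_Icc_zpow_le _ hd _ _

lemma circleExp_two_mul_mul_intCast_ne_one {φ : ℝ} (hφ : Irrational (φ / Real.pi)) {d : ℤ}
    (hd : d ≠ 0) : Circle.exp (2 * φ * d) ≠ 1 := by
  rintro hexp
  obtain ⟨k, hk⟩ := Circle.exp_eq_one.1 hexp
  refine hφ ⟨k / d, ?_⟩
  have hd' : (d : ℝ) ≠ 0 := Int.cast_ne_zero.2 hd
  push_cast
  field_simp
  linarith

theorem tendsto_norm_sum_circleExp_sq_div {φ : ℝ} (hφ : Irrational (φ / Real.pi)) :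
    Tendsto (fun n : ℕ ↦ ‖∑ s ∈ Icc (1 : ℤ) n, (Circle.exp (φ * s ^ 2) : ℂ)‖ / n) atTop (𝓝 0) := by
  refine tendsto_norm_sum_div_of_autocorrelation (fun s ↦ (Circle.norm_coe _).le) fun d hd ↦ ?_
  exact squeeze_zero (fun n ↦ by positivity)
    (fun n ↦ div_le_div_of_nonneg_right
      (norm_autocorrelation_circleExp_sq_le φ n (circleExp_two_mul_mul_intCast_ne_one hφ hd))
      n.cast_nonneg)
    (tendsto_const_div_atTop_nhds_zero_nat _)

theorem stmt3 :
    ∃ S : Set ℝ, S.Countable ∧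
      ∀ φ ∈ Set.Ioo (0 : ℝ) Real.pi, φ ∉ S →
        Tendsto (fun n : ℕ => (1 / (n : ℝ)) * ∑ t ∈ Finset.Icc 1 n, Real.cos (φ * (t : ℝ) ^ 2))
          atTop (nhds 0) ∧
        Tendsto (fun n : ℕ => (1 / (n : ℝ)) * ∑ t ∈ Finset.Icc 1 n, Real.sin (φ * (t : ℝ) ^ 2))
          atTop (nhds 0) := by
  refine ⟨Set.range fun q : ℚ ↦ (q : ℝ) * Real.pi, Set.countable_range _, fun φ _ hφ ↦ ?_⟩
  have hirr : Irrational (φ / Real.pi) := fun ⟨q, hq⟩ ↦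
    hφ ⟨q, show (q : ℝ) * Real.pi = φ by rw [hq, div_mul_cancel₀ _ Real.pi_ne_zero]⟩
  set S : ℕ → ℂ := fun n ↦ ∑ s ∈ Icc (1 : ℤ) n, (Circle.exp (φ * s ^ 2) : ℂ)
  have hS (n : ℕ) : S n = ∑ t ∈ Icc 1 n, (Circle.exp (φ * (t : ℝ) ^ 2) : ℂ) := by
    simpa only [Nat.cast_one, Int.cast_natCast] using
      (sum_Icc_natCast (fun s : ℤ ↦ (Circle.exp (φ * (s : ℝ) ^ 2) : ℂ)) 1 n).symm
  have hbound {x : ℕ → ℝ} (hx : ∀ n, |x n| ≤ ‖S n‖) :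
      Tendsto (fun n : ℕ ↦ (1 / (n : ℝ)) * x n) atTop (𝓝 0) := by
    refine squeeze_zero_norm (fun n ↦ ?_) (tendsto_norm_sum_circleExp_sq_div hirr)
    rw [norm_mul, norm_div, norm_one, RCLike.norm_natCast, one_div_mul_eq_div, Real.norm_eq_abs]
    exact div_le_div_of_nonneg_right (hx n) n.cast_nonneg
  constructor
  · refine hbound fun n ↦ (le_of_eq ?_).trans (Complex.abs_re_le_norm (S n))
    simp only [hS, Complex.re_sum, Circle.coe_exp, Complex.exp_ofReal_mul_I_re]
  · refine hbound fun n ↦ (le_of_eq ?_).trans (Complex.abs_im_le_norm (S n))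
    simp only [hS, Complex.im_sum, Circle.coe_exp, Complex.exp_ofReal_mul_I_im]
end

section
/- For all but countably many φ in (0, π) and every nonnegative integer k, lim_{n→∞} (1/n^{k+1}) Σ_{t=1}^n t^k cos²(φ t²) = 1/(2(k+1)), and the same with sin² in place of cos². -/
/-!
Since `cos² x = 1/2 + cos (2x) / 2` and `sin² x = 1/2 - cos (2x) / 2`, everything reduces to
Weyl's theorem that the Cesàro means of `cos (θ t²)` vanish when `θ / π` is irrational; the
exceptional set is `ℚ π`. Van der Corput's difference trick bounds `|∑ e^{iθt²}|` by the
correlations `∑ₜ e^{iθ(t+j)²} e^{-iθ(t+j')²}`, which are geometric sums of ratio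
`e^{2iθ(j-j')} ≠ 1`, hence bounded. The weights `t^k` are then removed by Abel summation,
using `∑ t^k ~ n^{k+1} / (k+1)` (comparison with `∫ x^k`).
-/

open Filter Finset Asymptotics ComplexConjugate

theorem sum_Icc_one_eq_sum_range {M : Type*} [AddCommMonoid M] (f : ℕ → M) (n : ℕ) :
    ∑ t ∈ Icc 1 n, f t = ∑ t ∈ range n, f (t + 1) := by
  rw [← Ico_add_one_right_eq_Icc, sum_Ico_eq_sum_range]
  simp [add_comm]

theorem sum_range_pow_le (n k : ℕ) :
    ∑ t ∈ range n, (t : ℝ) ^ k ≤ (n : ℝ) ^ (k + 1) / (k + 1) := by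
  have h := MonotoneOn.sum_le_integral (x₀ := 0) (a := n) (f := fun x : ℝ => x ^ k)
    (fun x hx y _ hxy => pow_le_pow_left₀ hx.1 hxy k)
  simpa [integral_pow] using h

theorem pow_succ_div_le_sum_Icc_pow (n k : ℕ) :
    (n : ℝ) ^ (k + 1) / (k + 1) ≤ ∑ t ∈ Icc 1 n, (t : ℝ) ^ k := by
  have h := MonotoneOn.integral_le_sum (x₀ := 0) (a := n) (f := fun x : ℝ => x ^ k)
    (fun x hx y _ hxy => pow_le_pow_left₀ hx.1 hxy k)
  simpa [integral_pow, sum_Icc_one_eq_sum_range] using h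

theorem sum_Icc_pow_le (n k : ℕ) :
    ∑ t ∈ Icc 1 n, (t : ℝ) ^ k ≤ (n : ℝ) ^ (k + 1) / (k + 1) + (n : ℝ) ^ k := by
  have hshift := (sum_range_succ' (fun t : ℕ => (t : ℝ) ^ k) n).symm.trans
    (sum_range_succ (fun t : ℕ => (t : ℝ) ^ k) n)
  rw [sum_Icc_one_eq_sum_range]
  push_cast at hshift ⊢
  have h0 : (0 : ℝ) ≤ 0 ^ k := by positivity
  linarith [sum_range_pow_le n k]

theorem tendsto_sum_Icc_pow_div (k : ℕ) :
    Tendsto (fun n : ℕ => (∑ t ∈ Icc 1 n, (t : ℝ) ^ k) / (n : ℝ) ^ (k + 1))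
      atTop (nhds (1 / ((k : ℝ) + 1))) := by
  have hupper : Tendsto (fun n : ℕ => 1 / ((k : ℝ) + 1) + 1 / n) atTop
      (nhds (1 / ((k : ℝ) + 1))) := by
    simpa using tendsto_one_div_atTop_nhds_zero_nat.const_add (1 / ((k : ℝ) + 1))
  refine tendsto_of_tendsto_of_tendsto_of_le_of_le' tendsto_const_nhds hupper ?_ ?_
  all_goals filter_upwards [eventually_gt_atTop 0] with n hn
  · rw [le_div_iff₀ (by positivity), one_div_mul_eq_div]
    exact pow_succ_div_le_sum_Icc_pow n k
  · rw [div_le_iff₀ (by positivity)]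
    have : (n : ℝ) ^ (k + 1) / (k + 1) + (n : ℝ) ^ k
        = (1 / ((k : ℝ) + 1) + 1 / n) * (n : ℝ) ^ (k + 1) := by
      field_simp; ring
    linarith [sum_Icc_pow_le n k]

theorem exists_norm_le_mul_add_of_isLittleO {E : Type*} [SeminormedAddCommGroup E] {f : ℕ → E}
    (hf : f =o[atTop] fun n => (n : ℝ)) {ε : ℝ} (hε : 0 < ε) : ∃ C, ∀ m, ‖f m‖ ≤ ε * m + C := by
  obtain ⟨N, hN⟩ := eventually_atTop.1 (hf.bound hε)
  refine ⟨∑ m ∈ range N, ‖f m‖, fun m => ?_⟩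
  have hC : 0 ≤ ∑ m ∈ range N, ‖f m‖ := by positivity
  rcases le_or_gt N m with hm | hm
  · have := hN m hm
    rw [Real.norm_natCast] at this
    linarith
  · have := single_le_sum (fun i _ => norm_nonneg (f i)) (mem_range.2 hm)
    nlinarith [(Nat.cast_nonneg m : (0 : ℝ) ≤ m)]

section Abel

variable {E : Type*} [SeminormedAddCommGroup E] [NormedSpace ℝ E] {w : ℕ → ℝ} {c : ℕ → E}
  {M : ℝ}

theorem norm_sum_range_smul_sub_le (hw : Monotone w) :
    ∀ n : ℕ, (∀ m ≤ n, ‖∑ t ∈ range m, c t‖ ≤ M) →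
      ‖∑ t ∈ range n, w (t + 1) • c t - w n • ∑ t ∈ range n, c t‖ ≤ (w n - w 0) * M
  | 0, _ => by simp
  | n + 1, hM => by
    have ih := norm_sum_range_smul_sub_le hw n fun m hm => hM m (hm.trans n.le_succ)
    have hstep : ∑ t ∈ range (n + 1), w (t + 1) • c t - w (n + 1) • ∑ t ∈ range (n + 1), c t
        = (∑ t ∈ range n, w (t + 1) • c t - w n • ∑ t ∈ range n, c t)
          + (w n - w (n + 1)) • ∑ t ∈ range n, c t := by
      simp only [sum_range_succ, smul_add, sub_smul]
      abel
    have hwn : 0 ≤ w (n + 1) - w n := sub_nonneg.2 (hw n.le_succ)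
    calc _ ≤ (w n - w 0) * M + (w (n + 1) - w n) * M := by
          rw [hstep]
          refine (norm_add_le _ _).trans (add_le_add ih ?_)
          rw [norm_smul, Real.norm_eq_abs, abs_sub_comm, abs_of_nonneg hwn]
          exact mul_le_mul_of_nonneg_left (hM n n.le_succ) hwn
      _ = (w (n + 1) - w 0) * M := by ring

theorem norm_sum_range_smul_le (hw : Monotone w) (hw0 : 0 ≤ w 0) {n : ℕ}
    (hM : ∀ m ≤ n, ‖∑ t ∈ range m, c t‖ ≤ M) :
    ‖∑ t ∈ range n, w (t + 1) • c t‖ ≤ 2 * w n * M := by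
  have hM0 : 0 ≤ M := by simpa using hM 0 n.zero_le
  have hwn : 0 ≤ w n := hw0.trans (hw n.zero_le)
  calc _ ≤ ‖w n • ∑ t ∈ range n, c t‖
        + ‖∑ t ∈ range n, w (t + 1) • c t - w n • ∑ t ∈ range n, c t‖ := norm_le_insert' _ _
    _ ≤ w n * M + (w n - w 0) * M := by
        refine add_le_add ?_ (norm_sum_range_smul_sub_le hw n hM)
        rw [norm_smul, Real.norm_of_nonneg hwn]
        exact mul_le_mul_of_nonneg_left (hM n le_rfl) hwn
    _ ≤ 2 * w n * M := by nlinarith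

theorem isLittleO_sum_Icc_pow_smul {b : ℕ → E}
    (hb : (fun n => ∑ t ∈ Icc 1 n, b t) =o[atTop] fun n => (n : ℝ)) (k : ℕ) :
    (fun n : ℕ => ∑ t ∈ Icc 1 n, (t : ℝ) ^ k • b t) =o[atTop] fun n => (n : ℝ) ^ (k + 1) := by
  rw [isLittleO_iff]
  intro ε hε
  obtain ⟨C, hC⟩ := exists_norm_le_mul_add_of_isLittleO hb (by positivity : 0 < ε / 4)
  have hw : Monotone fun t : ℕ => (t : ℝ) ^ k :=
    fun _ _ h => pow_le_pow_left₀ (Nat.cast_nonneg _) (Nat.cast_le.2 h) k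
  filter_upwards [tendsto_natCast_atTop_atTop.eventually_ge_atTop (4 * C / ε)] with n hn
  have hbound : ‖∑ t ∈ Icc 1 n, (t : ℝ) ^ k • b t‖ ≤ 2 * (n : ℝ) ^ k * (ε / 4 * n + C) := by
    rw [sum_Icc_one_eq_sum_range]
    refine norm_sum_range_smul_le (w := fun t : ℕ => (t : ℝ) ^ k) (c := fun t => b (t + 1))
      hw (by positivity) fun m hm => ?_
    rw [← sum_Icc_one_eq_sum_range]
    have : ε / 4 * m ≤ ε / 4 * n := by gcongr
    linarith [hC m]
  have h4C : 4 * C ≤ ε * n := by rw [div_le_iff₀ hε] at hn; linarith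
  rw [norm_pow, Real.norm_natCast]
  calc _ ≤ 2 * (n : ℝ) ^ k * (ε / 4 * n + C) := hbound
    _ ≤ (n : ℝ) ^ k * (ε * n) := by nlinarith [pow_nonneg (Nat.cast_nonneg n : (0 : ℝ) ≤ n) k]
    _ = ε * (n : ℝ) ^ (k + 1) := by ring

end Abel

theorem tendsto_sum_Icc_pow_mul_div {b : ℕ → ℝ} {L : ℝ}
    (hb : Tendsto (fun n : ℕ => (∑ t ∈ Icc 1 n, b t) / n) atTop (nhds L)) (k : ℕ) :
    Tendsto (fun n : ℕ => (∑ t ∈ Icc 1 n, (t : ℝ) ^ k * b t) / (n : ℝ) ^ (k + 1))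
      atTop (nhds (L / (k + 1))) := by
  have hdev : (fun n => ∑ t ∈ Icc 1 n, (b t - L)) =o[atTop] fun n => (n : ℝ) := by
    refine (isLittleO_iff_tendsto fun n hn => by simp_all).2 ?_
    have := hb.sub_const L
    rw [sub_self] at this
    refine this.congr' ?_
    filter_upwards [eventually_gt_atTop 0] with n hn
    rw [sum_sub_distrib, sum_const, Nat.card_Icc, Nat.add_sub_cancel, nsmul_eq_mul]
    field_simp
  have hmain := ((tendsto_sum_Icc_pow_div k).const_mul L).add
    (isLittleO_sum_Icc_pow_smul hdev k).tendsto_div_nhds_zero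
  rw [mul_one_div, add_zero] at hmain
  refine hmain.congr fun n => ?_
  simp only [smul_eq_mul, mul_sub, sum_sub_distrib, ← sum_mul]
  ring

theorem tendsto_sum_Icc_const_add_mul_div {c : ℕ → ℝ} {L : ℝ}
    (hc : Tendsto (fun n : ℕ => (∑ t ∈ Icc 1 n, c t) / n) atTop (nhds L)) (α β : ℝ) :
    Tendsto (fun n : ℕ => (∑ t ∈ Icc 1 n, (α + β * c t)) / n) atTop (nhds (α + β * L)) := by
  refine ((hc.const_mul β).const_add α).congr' ?_
  filter_upwards [eventually_gt_atTop 0] with n hn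
  rw [sum_add_distrib, ← mul_sum, sum_const, Nat.card_Icc, Nat.add_sub_cancel, nsmul_eq_mul]
  field_simp

section Shift

variable {E : Type*} [SeminormedAddCommGroup E] {a : ℕ → E}

theorem norm_sum_range_add_sub_sum_le (ha : ∀ t, ‖a t‖ ≤ 1) (n : ℕ) :
    ∀ j : ℕ, ‖∑ t ∈ range n, a (t + j) - ∑ t ∈ range n, a t‖ ≤ 2 * j
  | 0 => by simp
  | j + 1 => by
    have hstep : ∑ t ∈ range n, a (t + (j + 1)) - ∑ t ∈ range n, a (t + j) = a (n + j) - a j := by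
      simpa [add_right_comm _ 1 j, add_assoc] using sum_range_sub (fun t => a (t + j)) n
    calc _ = ‖(a (n + j) - a j) + (∑ t ∈ range n, a (t + j) - ∑ t ∈ range n, a t)‖ := by
          rw [← hstep, sub_add_sub_cancel]
      _ ≤ (1 + 1) + 2 * j := (norm_add_le _ _).trans
          (add_le_add ((norm_sub_le _ _).trans (add_le_add (ha _) (ha _)))
            (norm_sum_range_add_sub_sum_le ha n j))
      _ = 2 * ((j + 1 : ℕ) : ℝ) := by push_cast; ring

theorem norm_nsmul_sum_sub_sum_blocks_le (ha : ∀ t, ‖a t‖ ≤ 1) (H n : ℕ) :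
    ‖H • ∑ t ∈ range n, a t - ∑ t ∈ range n, ∑ j ∈ range H, a (t + j)‖ ≤ 2 * (H : ℝ) ^ 2 := by
  have hconst : H • ∑ t ∈ range n, a t = ∑ _j ∈ range H, ∑ t ∈ range n, a t := by simp
  rw [hconst, sum_comm (s := range n), ← sum_sub_distrib]
  calc _ ≤ ∑ j ∈ range H, ‖∑ t ∈ range n, a t - ∑ t ∈ range n, a (t + j)‖ := norm_sum_le _ _
    _ ≤ ∑ _j ∈ range H, 2 * (H : ℝ) := sum_le_sum fun j hj => by
        rw [norm_sub_rev]
        refine (norm_sum_range_add_sub_sum_le ha n j).trans ?_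
        gcongr
        exact (mem_range.1 hj).le
    _ = 2 * (H : ℝ) ^ 2 := by simp only [sum_const, card_range, nsmul_eq_mul]; ring

end Shift

def correlation (a : ℕ → ℂ) (j j' n : ℕ) : ℂ :=
  ∑ t ∈ range n, a (t + j) * conj (a (t + j'))

theorem norm_correlation_le {a : ℕ → ℂ} (ha : ∀ t, ‖a t‖ ≤ 1) (j j' n : ℕ) :
    ‖correlation a j j' n‖ ≤ n := by
  calc _ ≤ ∑ t ∈ range n, ‖a (t + j) * conj (a (t + j'))‖ := norm_sum_le _ _
    _ ≤ ∑ _t ∈ range n, (1 : ℝ) := sum_le_sum fun t _ => by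
        rw [norm_mul, Complex.norm_conj]
        exact mul_le_one₀ (ha _) (norm_nonneg _) (ha _)
    _ = n := by simp

theorem sum_norm_sq_blocks_eq (a : ℕ → ℂ) (H n : ℕ) :
    ((∑ t ∈ range n, ‖∑ j ∈ range H, a (t + j)‖ ^ 2 : ℝ) : ℂ)
      = ∑ j ∈ range H, ∑ j' ∈ range H, correlation a j j' n := by
  simp only [correlation]
  push_cast
  simp only [← Complex.mul_conj', map_sum, sum_mul_sum]
  rw [sum_comm]
  refine sum_congr rfl fun j _ => sum_comm

theorem sq_mul_norm_sum_range_le {a : ℕ → ℂ} (ha : ∀ t, ‖a t‖ ≤ 1) (H n : ℕ) :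
    (H * ‖∑ t ∈ range n, a t‖) ^ 2
      ≤ 8 * (H : ℝ) ^ 4 + 2 * n * ∑ j ∈ range H, ∑ j' ∈ range H, ‖correlation a j j' n‖ := by
  set b := fun t => ∑ j ∈ range H, a (t + j)
  have hblocks : H * ‖∑ t ∈ range n, a t‖ ≤ 2 * (H : ℝ) ^ 2 + ‖∑ t ∈ range n, b t‖ := by
    have hnorm : ‖H • ∑ t ∈ range n, a t‖ = H * ‖∑ t ∈ range n, a t‖ := by
      rw [nsmul_eq_mul, norm_mul, Complex.norm_natCast]
    rw [← hnorm]
    exact (norm_le_norm_sub_add _ _).trans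
      (add_le_add_left (norm_nsmul_sum_sub_sum_blocks_le ha H n) _)
  have hCS : ‖∑ t ∈ range n, b t‖ ^ 2 ≤ n * ∑ t ∈ range n, ‖b t‖ ^ 2 := by
    refine (pow_le_pow_left₀ (norm_nonneg _) (norm_sum_le _ _) 2).trans ?_
    simpa using sq_sum_le_card_mul_sum_sq (s := range n) (f := fun t => ‖b t‖)
  have hcorr : ∑ t ∈ range n, ‖b t‖ ^ 2
      ≤ ∑ j ∈ range H, ∑ j' ∈ range H, ‖correlation a j j' n‖ := by
    calc _ = ‖((∑ t ∈ range n, ‖b t‖ ^ 2 : ℝ) : ℂ)‖ := by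
          rw [Complex.norm_real, Real.norm_of_nonneg (by positivity)]
      _ ≤ _ := by
          rw [sum_norm_sq_blocks_eq]
          exact (norm_sum_le _ _).trans (sum_le_sum fun j _ => norm_sum_le _ _)
  calc _ ≤ (2 * (H : ℝ) ^ 2 + ‖∑ t ∈ range n, b t‖) ^ 2 :=
        pow_le_pow_left₀ (by positivity) hblocks 2
    _ ≤ 8 * (H : ℝ) ^ 4 + 2 * ‖∑ t ∈ range n, b t‖ ^ 2 := by
        nlinarith [sq_nonneg (2 * (H : ℝ) ^ 2 - ‖∑ t ∈ range n, b t‖)]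
    _ ≤ _ := by
        have := mul_le_mul_of_nonneg_left hcorr (Nat.cast_nonneg n : (0 : ℝ) ≤ n)
        linarith

theorem isLittleO_sum_range_of_correlation {a : ℕ → ℂ} (ha : ∀ t, ‖a t‖ ≤ 1)
    (hcorr : ∀ j j', j ≠ j' → (fun n => correlation a j j' n) =o[atTop] fun n => (n : ℝ)) :
    (fun n => ∑ t ∈ range n, a t) =o[atTop] fun n => (n : ℝ) := by
  rw [isLittleO_iff]
  intro c hc
  obtain ⟨H, hH⟩ := exists_nat_ge (6 / c ^ 2)
  have hHpos : (0 : ℝ) < H := lt_of_lt_of_le (by positivity) hH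
  have hHc : 6 ≤ H * c ^ 2 := by rwa [div_le_iff₀ (by positivity)] at hH
  have hpairs : ∀ᶠ n : ℕ in atTop, ∀ j ∈ range H, ∀ j' ∈ range H,
      ‖correlation a j j' n‖ ≤ (if j = j' then (n : ℝ) else 0) + c ^ 2 / 6 * n := by
    simp only [eventually_all_finset]
    intro j _ j' _
    by_cases hjj : j = j'
    · filter_upwards with n
      simpa [hjj] using (norm_correlation_le ha j' j' n).trans
        (le_add_of_nonneg_right (by positivity))
    · filter_upwards [(hcorr j j' hjj).bound (by positivity : 0 < c ^ 2 / 6)] with n hn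
      simpa [hjj] using hn
  -- `(H‖∑ a‖)² ≤ 8H⁴ + 2Hn² + (cHn)²/3`, and `H ≥ 6/c²`, `n ≥ 5H/c` make each of the first
  -- two terms at most `(cHn)²/3`.
  filter_upwards [hpairs, tendsto_natCast_atTop_atTop.eventually_ge_atTop (5 * H / c)]
    with n hpairs hn
  have hsum : ∑ j ∈ range H, ∑ j' ∈ range H, ‖correlation a j j' n‖
      ≤ H * n + H ^ 2 * (c ^ 2 / 6) * n := by
    refine (sum_le_sum fun j hj => sum_le_sum fun j' hj' => hpairs j hj j' hj').trans_eq ?_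
    rw [sum_congr rfl fun j hj => by rw [sum_add_distrib, sum_ite_eq, if_pos hj]]
    simp only [sum_const, card_range, nsmul_eq_mul, smul_add, add_right_inj]
    ring
  have hn' : 5 * H ≤ c * n := by rw [div_le_iff₀ hc] at hn; linarith
  have hsq : (H * ‖∑ t ∈ range n, a t‖) ^ 2 ≤ (H * (c * n)) ^ 2 := by
    calc _ ≤ 8 * (H : ℝ) ^ 4 + 2 * n * (H * n + H ^ 2 * (c ^ 2 / 6) * n) :=
          (sq_mul_norm_sum_range_le ha H n).trans (by gcongr)
      _ ≤ (H * (c * n)) ^ 2 := by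
          have h25 : 25 * (H : ℝ) ^ 2 ≤ (c * n) ^ 2 := by nlinarith
          nlinarith [mul_le_mul_of_nonneg_left h25 (by positivity : (0 : ℝ) ≤ H ^ 2),
            mul_le_mul_of_nonneg_left hHc (by positivity : (0 : ℝ) ≤ H * n ^ 2)]
  have := le_of_pow_le_pow_left₀ two_ne_zero (by positivity) hsq
  rw [Real.norm_natCast]
  exact le_of_mul_le_mul_left this hHpos

theorem norm_geom_sum_le {r : ℂ} (hr : ‖r‖ = 1) (hr1 : r ≠ 1) (n : ℕ) :
    ‖∑ t ∈ range n, r ^ t‖ ≤ 2 / ‖1 - r‖ := by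
  rw [geom_sum_eq hr1, norm_div, norm_sub_rev r]
  gcongr
  calc ‖r ^ n - 1‖ ≤ ‖r ^ n‖ + ‖(1 : ℂ)‖ := norm_sub_le _ _
    _ = 2 := by rw [norm_pow, hr]; norm_num

theorem exp_mul_I_ne_one_of_irrational {θ : ℝ} (hθ : Irrational (θ / Real.pi)) {d : ℤ}
    (hd : d ≠ 0) : Complex.exp (↑(2 * θ * d) * Complex.I) ≠ 1 := by
  intro h
  obtain ⟨m, hm⟩ := Complex.exp_eq_one_iff.1 h
  have hreal : 2 * θ * d = m * (2 * Real.pi) := by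
    have : ((2 * θ * d : ℝ) : ℂ) = ((m * (2 * Real.pi) : ℝ) : ℂ) := by
      refine mul_right_cancel₀ Complex.I_ne_zero (hm.trans ?_)
      push_cast
      ring
    exact_mod_cast this
  refine (irrational_iff_ne_rational _).1 hθ m d hd ?_
  field_simp
  linarith

theorem correlation_exp_quadratic (θ : ℝ) (j j' n : ℕ) :
    correlation (fun t : ℕ => Complex.exp ((θ * ((t : ℝ) + 1) ^ 2 : ℝ) * Complex.I)) j j' n
      = Complex.exp (↑(θ * ((j : ℝ) - j') * ((j : ℝ) + j' + 2)) * Complex.I)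
        * ∑ t ∈ range n, Complex.exp (↑(2 * θ * ((j : ℝ) - j')) * Complex.I) ^ t := by
  rw [correlation, mul_sum]
  refine sum_congr rfl fun t _ => ?_
  rw [← Complex.exp_conj, map_mul, Complex.conj_ofReal, Complex.conj_I, ← Complex.exp_nat_mul,
    ← Complex.exp_add, ← Complex.exp_add]
  congr 1
  push_cast
  ring

theorem isLittleO_sum_exp_mul_sq {θ : ℝ} (hθ : Irrational (θ / Real.pi)) :
    (fun n : ℕ => ∑ t ∈ Icc 1 n, Complex.exp (↑(θ * (t : ℝ) ^ 2) * Complex.I))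
      =o[atTop] fun n => (n : ℝ) := by
  simp_rw [sum_Icc_one_eq_sum_range, Nat.cast_succ]
  refine isLittleO_sum_range_of_correlation (fun t => (Complex.norm_exp_ofReal_mul_I _).le)
    fun j j' hjj => ?_
  have hr1 : Complex.exp (↑(2 * θ * ((j : ℝ) - j')) * Complex.I) ≠ 1 := by
    have := exp_mul_I_ne_one_of_irrational hθ (sub_ne_zero.2 (Int.ofNat_inj.not.2 hjj))
    push_cast at this ⊢
    exact this
  refine IsBigO.trans_isLittleO (g := fun _ => (1 : ℝ)) ?_
    ((isLittleO_one_left_iff ℝ).2 (by simpa using tendsto_natCast_atTop_atTop))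
  refine IsBigO.of_bound (2 / ‖1 - Complex.exp (↑(2 * θ * ((j : ℝ) - j')) * Complex.I)‖)
    (Eventually.of_forall fun n => ?_)
  rw [correlation_exp_quadratic, norm_mul, Complex.norm_exp_ofReal_mul_I, one_mul, norm_one,
    mul_one]
  exact norm_geom_sum_le (Complex.norm_exp_ofReal_mul_I _) hr1 n

theorem tendsto_sum_cos_mul_sq_div {θ : ℝ} (hθ : Irrational (θ / Real.pi)) :
    Tendsto (fun n : ℕ => (∑ t ∈ Icc 1 n, Real.cos (θ * (t : ℝ) ^ 2)) / n) atTop (nhds 0) := by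
  refine IsLittleO.tendsto_div_nhds_zero (IsBigO.trans_isLittleO ?_ (isLittleO_sum_exp_mul_sq hθ))
  refine IsBigO.of_bound 1 (Eventually.of_forall fun n => ?_)
  rw [one_mul]
  have hre : ∑ t ∈ Icc 1 n, Real.cos (θ * (t : ℝ) ^ 2)
      = (∑ t ∈ Icc 1 n, Complex.exp (↑(θ * (t : ℝ) ^ 2) * Complex.I)).re := by
    rw [Complex.re_sum]
    exact sum_congr rfl fun t _ => (Complex.exp_ofReal_mul_I_re _).symm
  rw [hre, Real.norm_eq_abs]
  exact Complex.abs_re_le_norm _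

theorem stmt4 :
    ∃ S : Set ℝ, S.Countable ∧
      ∀ φ ∈ Set.Ioo (0 : ℝ) Real.pi, φ ∉ S → ∀ k : ℕ,
        Tendsto (fun n : ℕ => (1 / (n : ℝ) ^ (k + 1)) *
            ∑ t ∈ Finset.Icc 1 n, (t : ℝ) ^ k * Real.cos (φ * (t : ℝ) ^ 2) ^ 2)
          atTop (nhds (1 / (2 * ((k : ℝ) + 1)))) ∧
        Tendsto (fun n : ℕ => (1 / (n : ℝ) ^ (k + 1)) *
            ∑ t ∈ Finset.Icc 1 n, (t : ℝ) ^ k * Real.sin (φ * (t : ℝ) ^ 2) ^ 2)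
          atTop (nhds (1 / (2 * ((k : ℝ) + 1)))) := by
  refine ⟨Set.range fun q : ℚ => (q : ℝ) * Real.pi, Set.countable_range _, fun φ _ hφ k => ?_⟩
  have hirr : Irrational (2 * φ / Real.pi) := by
    rintro ⟨q, hq⟩
    refine hφ ⟨q / 2, ?_⟩
    push_cast
    rw [hq]
    field_simp
  have hcos := tendsto_sum_cos_mul_sq_div hirr
  have hcos_sq : ∀ t : ℕ, Real.cos (φ * (t : ℝ) ^ 2) ^ 2
      = 1 / 2 + 1 / 2 * Real.cos (2 * φ * (t : ℝ) ^ 2) := fun t => by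
    rw [Real.cos_sq]; ring_nf
  have hsin_sq : ∀ t : ℕ, Real.sin (φ * (t : ℝ) ^ 2) ^ 2
      = 1 / 2 + -(1 / 2) * Real.cos (2 * φ * (t : ℝ) ^ 2) := fun t => by
    rw [Real.sin_sq, hcos_sq]; ring
  have hlim (β : ℝ) : (1 / 2 + β * 0) / ((k : ℝ) + 1) = 1 / (2 * ((k : ℝ) + 1)) := by
    rw [mul_zero, add_zero, div_div]
  constructor
  · simp_rw [one_div_mul_eq_div, hcos_sq]
    have := tendsto_sum_Icc_pow_mul_div (tendsto_sum_Icc_const_add_mul_div hcos (1 / 2) (1 / 2)) k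
    rwa [hlim] at this
  · simp_rw [one_div_mul_eq_div, hsin_sq]
    have :=
      tendsto_sum_Icc_pow_mul_div (tendsto_sum_Icc_const_add_mul_div hcos (1 / 2) (-(1 / 2))) k
    rwa [hlim] at this
end

section
/- For all but countably many φ in (0, π) and every nonnegative integer k, lim_{n→∞} (1/n^{k+1}) Σ_{t=1}^n t^k sin(φ t²) cos(φ t²) = 0. -/
/-!
Since `sin x cos x = sin (2x) / 2`, it suffices to show that the averages of `sin (a t²)`, `a = 2φ`,
tend to `0` whenever `a / π` is irrational, i.e. `sin (a h) ≠ 0` for every `h ≥ 1`; the weights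
`t ^ k` are then removed by Abel summation. For the Weyl sum `S n = ∑ exp (i a t²)`, one step of
van der Corput differencing bounds `‖S n‖²` by `2 ∑_{h < n}` of geometric sums with ratio
`exp (2 i a h)`, each at most `min (n, 1 / |sin (a h)|)`. As `|sin (a (h' - h))| ≤ |sin (a h)| +
|sin (a h')|`, for small `ε` the lags with `|sin (a h)| < ε` are more than `D` apart, so there are
at most `n / (D + 1) + 1` of them and `‖S n‖² / n² ≤ 2 / (D + 1) + O_D (1 / n)`.
-/

open Filter Finset ComplexConjugate Topology

lemma normSq_sum_range_add_sum_normSq (z : ℕ → ℂ) (n : ℕ) :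
    Complex.normSq (∑ t ∈ range n, z t) + ∑ t ∈ range n, Complex.normSq (z t) =
      2 * (∑ t ∈ range n, ∑ j ∈ range (t + 1), z t * conj (z (t - j))).re := by
  induction n with
  | zero => simp
  | succ n ih =>
    have hreflect : ∑ j ∈ range (n + 1), z n * conj (z (n - j)) =
        z n * conj (∑ s ∈ range n, z s) + Complex.normSq (z n) := by
      have h := sum_range_reflect z (n + 1)
      simp only [Nat.add_sub_cancel] at h
      rw [← mul_sum, ← map_sum, h, sum_range_succ, map_add, mul_add, Complex.mul_conj]
    rw [sum_range_succ, sum_range_succ, sum_range_succ _ n, Complex.normSq_add, hreflect,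
      Complex.add_re, Complex.add_re, mul_add, ← ih, Complex.ofReal_re, ← Complex.conj_re,
      map_mul, Complex.conj_conj, mul_comm (conj _)]
    ring

lemma sq_norm_sum_range_le (z : ℕ → ℂ) (n : ℕ) :
    ‖∑ t ∈ range n, z t‖ ^ 2 ≤
      2 * ∑ h ∈ range n, ‖∑ j ∈ range (n - h), z (j + h) * conj (z j)‖ := by
  have hflip : ∑ t ∈ range n, ∑ j ∈ range (t + 1), z t * conj (z (t - j)) =
      ∑ h ∈ range n, ∑ j ∈ range (n - h), z (j + h) * conj (z j) := by
    rw [← sum_range_diag_flip n (fun h j => z (j + h) * conj (z j))]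
    refine sum_congr rfl fun t _ => sum_congr rfl fun j hj => ?_
    rw [Nat.sub_add_cancel (Nat.lt_succ_iff.mp (mem_range.mp hj))]
  have hnonneg : 0 ≤ ∑ t ∈ range n, Complex.normSq (z t) :=
    sum_nonneg fun t _ => Complex.normSq_nonneg _
  calc ‖∑ t ∈ range n, z t‖ ^ 2
      ≤ 2 * (∑ h ∈ range n, ∑ j ∈ range (n - h), z (j + h) * conj (z j)).re := by
        rw [Complex.sq_norm, ← hflip, ← normSq_sum_range_add_sum_normSq]
        linarith
    _ ≤ 2 * ∑ h ∈ range n, ‖∑ j ∈ range (n - h), z (j + h) * conj (z j)‖ := by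
        gcongr
        exact (Complex.re_le_norm _).trans (norm_sum_le _ _)

lemma norm_geom_sum_le_of_norm_eq_one {w : ℂ} (hw : ‖w‖ = 1) (hw1 : w ≠ 1) (m : ℕ) :
    ‖∑ j ∈ range m, w ^ j‖ ≤ 2 / ‖w - 1‖ := by
  rw [geom_sum_eq hw1, norm_div]
  gcongr
  calc ‖w ^ m - 1‖ ≤ ‖w ^ m‖ + ‖(1 : ℂ)‖ := norm_sub_le _ _
    _ = 2 := by rw [norm_pow, hw]; norm_num

lemma norm_sum_exp_mul_I_pow_le {x : ℝ} (hx : Real.sin x ≠ 0) (m : ℕ) :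
    ‖∑ j ∈ range m, Complex.exp ((2 * x : ℝ) * Complex.I) ^ j‖ ≤ 1 / |Real.sin x| := by
  have hnorm : ‖Complex.exp ((2 * x : ℝ) * Complex.I) - 1‖ = 2 * |Real.sin x| := by
    have := Complex.norm_exp_I_mul_ofReal_sub_one (2 * x)
    rw [mul_div_cancel_left₀ _ two_ne_zero, norm_mul, Real.norm_eq_abs, abs_two,
      Real.norm_eq_abs] at this
    rw [← this]; push_cast; ring_nf
  have hne : Complex.exp ((2 * x : ℝ) * Complex.I) ≠ 1 := by
    intro h
    rw [h, sub_self, norm_zero] at hnorm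
    exact hx (abs_eq_zero.mp (by linarith))
  calc _ ≤ 2 / ‖Complex.exp ((2 * x : ℝ) * Complex.I) - 1‖ := by
        refine norm_geom_sum_le_of_norm_eq_one ?_ hne m
        exact_mod_cast Complex.norm_exp_ofReal_mul_I (2 * x)
    _ = 1 / |Real.sin x| := by rw [hnorm]; field_simp

lemma card_le_div_add_one_of_separated {T : Finset ℕ} {n D : ℕ} (hT : ∀ h ∈ T, h < n)
    (hsep : ∀ h ∈ T, ∀ h' ∈ T, h < h' → D < h' - h) : (#T : ℝ) ≤ n / (D + 1) + 1 := by
  have hinj : Set.InjOn (· / (D + 1)) T := by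
    intro h hh h' hh' heq
    by_contra hne
    have := Nat.div_add_mod h (D + 1)
    have := Nat.div_add_mod h' (D + 1)
    have := Nat.mod_lt h D.add_one_pos
    have := Nat.mod_lt h' D.add_one_pos
    simp only at heq
    rw [heq] at *
    rcases Nat.lt_or_gt_of_ne hne with hlt | hlt
    · have := hsep h hh h' hh' hlt; omega
    · have := hsep h' hh' h hh hlt; omega
  have hmaps : Set.MapsTo (· / (D + 1)) T (range (n / (D + 1) + 1)) := fun h hh =>
    mem_range.mpr (Nat.lt_succ_of_le (Nat.div_le_div_right (hT h hh).le))
  calc (#T : ℝ) ≤ (n / (D + 1) : ℕ) + 1 := by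
        exact_mod_cast (card_le_card_of_injOn _ hmaps hinj).trans (card_range _).le
    _ ≤ n / (D + 1) + 1 := by
        gcongr
        exact_mod_cast Nat.cast_div_le (α := ℝ)

lemma abs_sin_mul_sub_le (a : ℝ) {h h' : ℕ} (hh : h ≤ h') :
    |Real.sin (a * (h' - h : ℕ))| ≤ |Real.sin (a * h)| + |Real.sin (a * h')| := by
  rw [Nat.cast_sub hh, mul_sub, Real.sin_sub]
  refine (abs_sub _ _).trans ?_
  rw [abs_mul, abs_mul, add_comm]
  gcongr
  · exact mul_le_of_le_one_left (abs_nonneg _) (Real.abs_cos_le_one _)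
  · exact mul_le_of_le_one_right (abs_nonneg _) (Real.abs_cos_le_one _)

lemma exists_pos_abs_sin_lt_separated {a : ℝ} (ha : ∀ h : ℕ, 1 ≤ h → Real.sin (a * h) ≠ 0)
    (D : ℕ) : ∃ ε > 0, ∀ h h' : ℕ, h < h' → |Real.sin (a * h)| < ε → |Real.sin (a * h')| < ε →
      D < h' - h := by
  obtain ⟨d₀, hd₀, hmin⟩ := (Icc 1 (D + 1)).exists_min_image (fun d : ℕ => |Real.sin (a * d)|)
    ⟨1, by simp⟩
  refine ⟨|Real.sin (a * d₀)| / 2, by simpa using ha d₀ (mem_Icc.mp hd₀).1, ?_⟩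
  intro h h' hlt hh hh'
  by_contra! hle
  have := hmin (h' - h) (mem_Icc.mpr ⟨by omega, by omega⟩)
  have := abs_sin_mul_sub_le a hlt.le
  linarith

section QuadraticPhase

variable (a b c : ℝ)

lemma exp_quadratic_add_mul_conj (h j : ℕ) :
    Complex.exp ((a * (j + h : ℕ) ^ 2 + b * (j + h : ℕ) + c : ℝ) * Complex.I) *
        conj (Complex.exp ((a * j ^ 2 + b * j + c : ℝ) * Complex.I)) =
      Complex.exp ((a * h ^ 2 + b * h : ℝ) * Complex.I) *
        Complex.exp ((2 * (a * h) : ℝ) * Complex.I) ^ j := by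
  rw [← Complex.exp_conj, ← Complex.exp_add, ← Complex.exp_nat_mul, ← Complex.exp_add,
    map_mul, Complex.conj_ofReal, Complex.conj_I]
  congr 1
  push_cast
  ring

lemma norm_sum_exp_quadratic_lag (h m : ℕ) :
    ‖∑ j ∈ range m, Complex.exp ((a * (j + h : ℕ) ^ 2 + b * (j + h : ℕ) + c : ℝ) * Complex.I) *
        conj (Complex.exp ((a * j ^ 2 + b * j + c : ℝ) * Complex.I))‖ =
      ‖∑ j ∈ range m, Complex.exp ((2 * (a * h) : ℝ) * Complex.I) ^ j‖ := by
  simp_rw [exp_quadratic_add_mul_conj, ← mul_sum, norm_mul, Complex.norm_exp_ofReal_mul_I,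
    one_mul]

lemma sq_norm_sum_exp_quadratic_le (ha : ∀ h : ℕ, 1 ≤ h → Real.sin (a * h) ≠ 0) (D : ℕ) :
    ∃ C, ∀ n : ℕ, ‖∑ t ∈ range n, Complex.exp ((a * t ^ 2 + b * t + c : ℝ) * Complex.I)‖ ^ 2 ≤
      2 * n ^ 2 / (D + 1) + C * n := by
  obtain ⟨ε, hε, hsep⟩ := exists_pos_abs_sin_lt_separated ha D
  refine ⟨2 + 2 / ε, fun n => ?_⟩
  set L : ℕ → ℝ := fun h => ‖∑ j ∈ range (n - h), Complex.exp ((2 * (a * h) : ℝ) * Complex.I) ^ j‖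
  have hL_le_n : ∀ h, L h ≤ n := fun h => by
    refine (norm_sum_le _ _).trans ?_
    simp_rw [norm_pow, Complex.norm_exp_ofReal_mul_I, one_pow, sum_const, card_range,
      nsmul_eq_mul, mul_one]
    exact_mod_cast Nat.sub_le n h
  have hL_le_inv : ∀ h : ℕ, ε ≤ |Real.sin (a * h)| → L h ≤ 1 / ε := fun h hh =>
    (norm_sum_exp_mul_I_pow_le (abs_pos.mp (hε.trans_le hh)) _).trans
      (one_div_le_one_div_of_le hε hh)
  set T := (range n).filter fun h : ℕ => |Real.sin (a * h)| < ε
  have hT : (#T : ℝ) ≤ n / (D + 1) + 1 := card_le_div_add_one_of_separated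
    (fun h hh => mem_range.mp (mem_filter.mp hh).1)
    (fun h hh h' hh' hlt => hsep h h' hlt (mem_filter.mp hh).2 (mem_filter.mp hh').2)
  calc _ ≤ 2 * ∑ h ∈ range n, L h := by
        refine (sq_norm_sum_range_le _ n).trans_eq ?_
        simp_rw [L, ← norm_sum_exp_quadratic_lag a b c]
    _ = 2 * (∑ h ∈ T, L h +
          ∑ h ∈ (range n).filter (fun h : ℕ => ¬ |Real.sin (a * h)| < ε), L h) := by
        rw [sum_filter_add_sum_filter_not]
    _ ≤ 2 * (#T * n + n * (1 / ε)) := by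
        gcongr
        · exact (sum_le_sum fun h _ => hL_le_n h).trans_eq (by rw [sum_const, nsmul_eq_mul])
        · refine (sum_le_sum fun h hh => hL_le_inv h (not_lt.mp (mem_filter.mp hh).2)).trans ?_
          rw [sum_const, nsmul_eq_mul]
          gcongr
          exact_mod_cast (card_filter_le _ _).trans (card_range n).le
    _ ≤ 2 * ((n / (D + 1) + 1) * n + n * (1 / ε)) := by gcongr
    _ = 2 * n ^ 2 / (D + 1) + (2 + 2 / ε) * n := by ring

end QuadraticPhase

lemma eventually_add_div_lt {ε δ : ℝ} (h : ε < δ) (C : ℝ) :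
    ∀ᶠ n : ℕ in atTop, ε + C / n < δ :=
  ((tendsto_const_div_atTop_nhds_zero_nat C).const_add ε).eventually
    (gt_mem_nhds (by rwa [add_zero]))

lemma tendsto_norm_sum_exp_quadratic_div {a : ℝ} (ha : ∀ h : ℕ, 1 ≤ h → Real.sin (a * h) ≠ 0)
    (b c : ℝ) :
    Tendsto (fun n : ℕ =>
      ‖∑ t ∈ range n, Complex.exp ((a * t ^ 2 + b * t + c : ℝ) * Complex.I)‖ / n) atTop (𝓝 0) := by
  rw [Metric.tendsto_nhds]
  intro δ hδ
  obtain ⟨D, hD⟩ := exists_nat_gt (2 / δ ^ 2)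
  have hDδ : 2 / ((D : ℝ) + 1) < δ ^ 2 := by
    rw [div_lt_iff₀ (by positivity)]
    rw [div_lt_iff₀ (by positivity)] at hD
    nlinarith
  obtain ⟨C, hC⟩ := sq_norm_sum_exp_quadratic_le a b c ha D
  filter_upwards [eventually_add_div_lt hDδ C, eventually_ge_atTop 1] with n hn hn1
  have hnpos : (0 : ℝ) < n := by exact_mod_cast hn1
  rw [Real.dist_eq, sub_zero, abs_of_nonneg (by positivity)]
  refine (pow_lt_pow_iff_left₀ (by positivity) hδ.le two_ne_zero).mp ?_
  calc _ ≤ (2 * n ^ 2 / (D + 1) + C * n) / n ^ 2 := by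
        rw [div_pow]
        gcongr
        exact hC n
    _ = 2 / (D + 1) + C / n := by field_simp
    _ < δ ^ 2 := hn

lemma tendsto_sum_sin_mul_sq_div {a : ℝ} (ha : ∀ h : ℕ, 1 ≤ h → Real.sin (a * h) ≠ 0) :
    Tendsto (fun n : ℕ => (∑ t ∈ Icc 1 n, Real.sin (a * (t : ℝ) ^ 2)) / n) atTop (𝓝 0) := by
  refine squeeze_zero_norm (fun n => ?_) (tendsto_norm_sum_exp_quadratic_div ha (2 * a) a)
  have hsum : ∑ t ∈ Icc 1 n, Real.sin (a * (t : ℝ) ^ 2) =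
      (∑ t ∈ range n, Complex.exp ((a * t ^ 2 + 2 * a * t + a : ℝ) * Complex.I)).im := by
    rw [← Ico_add_one_right_eq_Icc, sum_Ico_eq_sum_range, Nat.add_sub_cancel, Complex.im_sum]
    refine sum_congr rfl fun t _ => ?_
    rw [Complex.exp_ofReal_mul_I_im]
    push_cast
    ring_nf
  rw [norm_div, hsum, Real.norm_eq_abs, RCLike.norm_natCast]
  gcongr
  exact Complex.abs_im_le_norm _

lemma exists_abs_le_mul_add_of_tendsto_div {u : ℕ → ℝ}
    (hu : Tendsto (fun m => u m / m) atTop (𝓝 0)) {ε : ℝ} (hε : 0 < ε) :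
    ∃ C, ∀ m, |u m| ≤ ε * m + C := by
  obtain ⟨N, hN⟩ := eventually_atTop.mp
    ((hu.eventually (Metric.ball_mem_nhds 0 hε)).and (eventually_ge_atTop 1))
  refine ⟨∑ m ∈ range N, |u m|, fun m => ?_⟩
  have hC : 0 ≤ ∑ m ∈ range N, |u m| := sum_nonneg fun _ _ => abs_nonneg _
  rcases lt_or_ge m N with hm | hm
  · have := single_le_sum (fun i _ => abs_nonneg (u i)) (mem_range.mpr hm)
    have : 0 ≤ ε * m := by positivity
    linarith
  · obtain ⟨hlt, hm1⟩ := hN m hm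
    have hmpos : (0 : ℝ) < m := by exact_mod_cast hm1
    rw [Real.dist_eq, sub_zero, abs_div, Nat.abs_cast, div_lt_iff₀ hmpos] at hlt
    linarith

section Abel

variable {E : Type*} [SeminormedAddCommGroup E] [NormedSpace ℝ E]

lemma sum_Icc_smul_eq_sub_sum_range (w : ℕ → ℝ) (a : ℕ → E) (n : ℕ) :
    ∑ t ∈ Icc 1 n, w t • a t =
      w n • ∑ t ∈ Icc 1 n, a t - ∑ t ∈ range n, (w (t + 1) - w t) • ∑ s ∈ Icc 1 t, a s := by
  induction n with
  | zero => simp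
  | succ n ih =>
    rw [sum_Icc_succ_top (by omega), sum_Icc_succ_top (by omega), ih, sum_range_succ, smul_add,
      sub_smul]
    abel

lemma norm_sum_Icc_smul_le {w : ℕ → ℝ} (hw : Monotone w) (hw0 : 0 ≤ w 0) (a : ℕ → E) {n : ℕ}
    {B : ℝ} (hB : ∀ m ≤ n, ‖∑ t ∈ Icc 1 m, a t‖ ≤ B) :
    ‖∑ t ∈ Icc 1 n, w t • a t‖ ≤ 2 * w n * B := by
  have hwn : 0 ≤ w n := hw0.trans (hw (Nat.zero_le n))
  have hB0 : 0 ≤ B := (norm_nonneg _).trans (hB 0 (Nat.zero_le n))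
  rw [sum_Icc_smul_eq_sub_sum_range]
  refine (norm_sub_le _ _).trans ?_
  have hlast : ‖w n • ∑ t ∈ Icc 1 n, a t‖ ≤ w n * B := by
    rw [norm_smul, Real.norm_of_nonneg hwn]
    exact mul_le_mul_of_nonneg_left (hB n le_rfl) hwn
  have hrest : ‖∑ t ∈ range n, (w (t + 1) - w t) • ∑ s ∈ Icc 1 t, a s‖ ≤ (w n - w 0) * B := by
    refine (norm_sum_le _ _).trans ?_
    rw [← sum_range_sub w n, sum_mul]
    refine sum_le_sum fun t ht => ?_
    have hstep : 0 ≤ w (t + 1) - w t := sub_nonneg.mpr (hw (Nat.le_succ t))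
    rw [norm_smul, Real.norm_of_nonneg hstep]
    exact mul_le_mul_of_nonneg_left (hB t (mem_range.mp ht).le) hstep
  nlinarith

end Abel

lemma tendsto_sum_pow_mul_div_pow {a : ℕ → ℝ}
    (ha : Tendsto (fun n : ℕ => (∑ t ∈ Icc 1 n, a t) / n) atTop (𝓝 0)) (k : ℕ) :
    Tendsto (fun n : ℕ => (∑ t ∈ Icc 1 n, (t : ℝ) ^ k * a t) / n ^ (k + 1)) atTop (𝓝 0) := by
  rw [Metric.tendsto_nhds]
  intro δ hδ
  obtain ⟨C, hC⟩ := exists_abs_le_mul_add_of_tendsto_div ha (by positivity : 0 < δ / 4)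
  filter_upwards [eventually_add_div_lt (by linarith : δ / 2 < δ) (2 * C),
    eventually_ge_atTop 1] with n hn hn1
  have hnpos : (0 : ℝ) < n := by exact_mod_cast hn1
  have hmono : Monotone fun t : ℕ => (t : ℝ) ^ k := fun s t hst =>
    pow_le_pow_left₀ s.cast_nonneg (Nat.cast_le.mpr hst) k
  have hsum := norm_sum_Icc_smul_le hmono (by positivity) a (B := δ / 4 * n + C) fun m hm => by
    have : (m : ℝ) ≤ n := by exact_mod_cast hm
    exact (hC m).trans (by gcongr)
  simp only [smul_eq_mul, Real.norm_eq_abs] at hsum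
  rw [Real.dist_eq, sub_zero, abs_div, abs_of_pos (pow_pos hnpos _), div_lt_iff₀ (pow_pos hnpos _)]
  calc _ ≤ 2 * (n : ℝ) ^ k * (δ / 4 * n + C) := hsum
    _ = (δ / 2 + 2 * C / n) * n ^ (k + 1) := by field_simp; ring
    _ < δ * n ^ (k + 1) := by gcongr

lemma sin_mul_natCast_ne_zero {x : ℝ} (hx : ∀ q : ℚ, x ≠ q * Real.pi) {h : ℕ} (hh : 1 ≤ h) :
    Real.sin (x * h) ≠ 0 := by
  intro hsin
  obtain ⟨m, hm⟩ := Real.sin_eq_zero_iff.mp hsin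
  have hpos : (0 : ℝ) < h := by exact_mod_cast hh
  refine hx (m / h) ?_
  push_cast
  field_simp
  linarith

theorem stmt5 :
    ∃ S : Set ℝ, S.Countable ∧
      ∀ φ ∈ Set.Ioo (0 : ℝ) Real.pi, φ ∉ S → ∀ k : ℕ,
        Tendsto (fun n : ℕ => (1 / (n : ℝ) ^ (k + 1)) *
            ∑ t ∈ Finset.Icc 1 n,
              (t : ℝ) ^ k * (Real.sin (φ * (t : ℝ) ^ 2) * Real.cos (φ * (t : ℝ) ^ 2)))
          atTop (nhds 0) := by
  refine ⟨Set.range fun q : ℚ => (q : ℝ) * Real.pi, Set.countable_range _, fun φ _ hφ k => ?_⟩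
  have h2φ : ∀ h : ℕ, 1 ≤ h → Real.sin (2 * φ * h) ≠ 0 := fun h =>
    sin_mul_natCast_ne_zero fun q hq => hφ ⟨q / 2, by push_cast; linarith⟩
  have hlim := (tendsto_sum_pow_mul_div_pow (tendsto_sum_sin_mul_sq_div h2φ) k).const_mul (1 / 2)
  rw [mul_zero] at hlim
  refine hlim.congr fun n => ?_
  simp_rw [mul_sum, sum_div, mul_sum]
  refine sum_congr rfl fun t _ => ?_
  rw [mul_assoc 2 φ, Real.sin_two_mul]
  ring
end

section
/- Let A⁰, B⁰ be real numbers with (A⁰)² + (B⁰)² > 0 and α⁰ ∈ (0, π). Define f₁(A, B, α) as the limit (when it exists) of (1/n) Σ_{t=1}^n (A⁰ cos(α⁰ t) + B⁰ sin(α⁰ t) − A cos(α t) − B sin(α t))². Then for all but countably many α ∈ (0,π): if α = α⁰ then f₁ = ((A⁰−A)² + (B⁰−B)²)/2, and if α ≠ α⁰ then f₁ = ((A⁰)² + (B⁰)² + A² + B²)/2. Consequently, for any c > 0, inf over the set {(A,B,α) : |A−A⁰| ≥ c or |B−B⁰| ≥ c} of f₁ is strictly positive. -/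
/-!
Expanding the square writes the summand as a constant plus harmonics `a cos (θ t) + b sin (θ t)`
with frequencies `2α`, `2α⁰`, `α⁰ - α`, `α⁰ + α`. A harmonic whose frequency is not a multiple of
`2π` has Cesàro mean zero, because it is the real part of a geometric series `∑ w zᵗ` with
`|z| = 1`, `z ≠ 1`, whose partial sums are bounded by `2 |w| / |z - 1|`. For `α, α⁰ ∈ (0, π)` all
these frequencies lie in `(-2π, 2π)` and are nonzero; when `α = α⁰` the summand is a single
harmonic squared and only `2α` occurs. So the formulas hold for every `α`: no exceptional set.
-/

open Filter Finset Real

def HasCesaroMean (f : ℕ → ℝ) (L : ℝ) : Prop :=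
  Tendsto (fun n : ℕ => (1 / (n : ℝ)) * ∑ t ∈ Icc 1 n, f t) atTop (nhds L)

namespace HasCesaroMean

variable {f g : ℕ → ℝ} {L M : ℝ}

theorem congr (hf : HasCesaroMean f L) (hfg : ∀ t, f t = g t) : HasCesaroMean g L :=
  funext hfg ▸ hf

theorem add (hf : HasCesaroMean f L) (hg : HasCesaroMean g M) :
    HasCesaroMean (fun t => f t + g t) (L + M) :=
  (Tendsto.add hf hg).congr fun n => by rw [sum_add_distrib, mul_add]

theorem sub (hf : HasCesaroMean f L) (hg : HasCesaroMean g M) :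
    HasCesaroMean (fun t => f t - g t) (L - M) :=
  (Tendsto.sub hf hg).congr fun n => by rw [sum_sub_distrib, mul_sub]

theorem const_mul (hf : HasCesaroMean f L) (c : ℝ) :
    HasCesaroMean (fun t => c * f t) (c * L) :=
  (Tendsto.const_mul c hf).congr fun n => by rw [← mul_sum, mul_left_comm]

end HasCesaroMean

theorem hasCesaroMean_const (c : ℝ) : HasCesaroMean (fun _ => c) c := by
  refine tendsto_const_nhds.congr' ?_
  filter_upwards [eventually_ne_atTop 0] with n hn
  rw [sum_const, Nat.card_Icc, Nat.add_sub_cancel, nsmul_eq_mul]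
  field_simp

theorem hasCesaroMean_zero_of_abs_sum_le {f : ℕ → ℝ} (C : ℝ)
    (h : ∀ n, |∑ t ∈ Icc 1 n, f t| ≤ C) : HasCesaroMean f 0 := by
  refine squeeze_zero_norm (fun n => ?_) (tendsto_const_div_atTop_nhds_zero_nat C)
  rw [norm_mul, Real.norm_eq_abs, Real.norm_eq_abs, abs_of_nonneg (by positivity), one_div,
    inv_mul_eq_div]
  exact div_le_div_of_nonneg_right (h n) n.cast_nonneg

theorem norm_sum_Icc_pow_le {𝕜 : Type*} [NormedField 𝕜] {z : 𝕜} (hz : ‖z‖ ≤ 1) (h1 : z ≠ 1)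
    (n : ℕ) : ‖∑ t ∈ Icc 1 n, z ^ t‖ ≤ 2 / ‖z - 1‖ := by
  have hshift : ∑ t ∈ Icc 1 n, z ^ t = z * ∑ t ∈ range n, z ^ t := by
    induction n with
    | zero => simp
    | succ n ih => rw [sum_Icc_succ_top (by omega), ih, sum_range_succ]; ring
  have hnum : ‖z ^ n - 1‖ ≤ 2 :=
    (norm_sub_le _ _).trans (by
      rw [norm_pow, norm_one]; linarith [pow_le_one₀ (n := n) (norm_nonneg z) hz])
  rw [hshift, geom_sum_eq h1, norm_mul, norm_div]
  calc ‖z‖ * (‖z ^ n - 1‖ / ‖z - 1‖) ≤ 1 * (2 / ‖z - 1‖) := by gcongr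
    _ = 2 / ‖z - 1‖ := one_mul _

theorem hasCesaroMean_harmonic {θ : ℝ} (hθ : cos θ ≠ 1) (a b : ℝ) :
    HasCesaroMean (fun t : ℕ => a * cos (θ * t) + b * sin (θ * t)) 0 := by
  set z := Complex.exp (θ * Complex.I)
  set w : ℂ := a - b * Complex.I
  have hz1 : z ≠ 1 := fun h => hθ (by rw [← Complex.exp_ofReal_mul_I_re θ]; simp [z, h])
  have hterm : ∀ t : ℕ, a * cos (θ * t) + b * sin (θ * t) = (w * z ^ t).re := fun t => by
    rw [← Complex.exp_nat_mul, ← mul_assoc, mul_comm (t : ℂ), ← Complex.ofReal_natCast,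
      ← Complex.ofReal_mul, Complex.mul_re, Complex.exp_ofReal_mul_I_re,
      Complex.exp_ofReal_mul_I_im]
    simp [w]
  refine hasCesaroMean_zero_of_abs_sum_le (‖w‖ * (2 / ‖z - 1‖)) fun n => ?_
  rw [sum_congr rfl fun t _ => hterm t, ← Complex.re_sum, ← mul_sum]
  refine (Complex.abs_re_le_norm _).trans ?_
  rw [norm_mul]
  exact mul_le_mul_of_nonneg_left
    (norm_sum_Icc_pow_le (Complex.norm_exp_ofReal_mul_I θ).le hz1 n) (norm_nonneg w)

theorem hasCesaroMean_harmonic_sq {θ : ℝ} (hθ : cos (2 * θ) ≠ 1) (a b : ℝ) :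
    HasCesaroMean (fun t : ℕ => (a * cos (θ * t) + b * sin (θ * t)) ^ 2) ((a ^ 2 + b ^ 2) / 2) := by
  have h := (hasCesaroMean_const ((a ^ 2 + b ^ 2) / 2)).add
    (hasCesaroMean_harmonic hθ ((a ^ 2 - b ^ 2) / 2) (a * b))
  rw [add_zero] at h
  refine h.congr fun t => ?_
  rw [mul_assoc, cos_two_mul, sin_two_mul]
  linear_combination (-b ^ 2) * sin_sq_add_cos_sq (θ * t)

theorem hasCesaroMean_harmonic_mul_harmonic {θ φ : ℝ} (hsub : cos (θ - φ) ≠ 1)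
    (hadd : cos (θ + φ) ≠ 1) (a b c d : ℝ) :
    HasCesaroMean (fun t : ℕ =>
      (a * cos (θ * t) + b * sin (θ * t)) * (c * cos (φ * t) + d * sin (φ * t))) 0 := by
  have h := (hasCesaroMean_harmonic hsub ((a * c + b * d) / 2) ((b * c - a * d) / 2)).add
    (hasCesaroMean_harmonic hadd ((a * c - b * d) / 2) ((a * d + b * c) / 2))
  rw [add_zero] at h
  refine h.congr fun t => ?_
  rw [sub_mul, add_mul, cos_sub, cos_add, sin_sub, sin_add]
  ring

theorem hasCesaroMean_sq_sub_harmonic_same_freq {θ : ℝ} (hθ : cos (2 * θ) ≠ 1) (a b c d : ℝ) :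
    HasCesaroMean
      (fun t : ℕ => (a * cos (θ * t) + b * sin (θ * t) - c * cos (θ * t) - d * sin (θ * t)) ^ 2)
      (((a - c) ^ 2 + (b - d) ^ 2) / 2) :=
  (hasCesaroMean_harmonic_sq hθ (a - c) (b - d)).congr fun t => by ring

theorem hasCesaroMean_sq_sub_harmonic {θ φ : ℝ} (hθ : cos (2 * θ) ≠ 1) (hφ : cos (2 * φ) ≠ 1)
    (hsub : cos (θ - φ) ≠ 1) (hadd : cos (θ + φ) ≠ 1) (a b c d : ℝ) :
    HasCesaroMean
      (fun t : ℕ => (a * cos (θ * t) + b * sin (θ * t) - c * cos (φ * t) - d * sin (φ * t)) ^ 2)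
      ((a ^ 2 + b ^ 2 + c ^ 2 + d ^ 2) / 2) := by
  have h := ((hasCesaroMean_harmonic_sq hθ a b).add (hasCesaroMean_harmonic_sq hφ c d)).sub
    ((hasCesaroMean_harmonic_mul_harmonic hsub hadd a b c d).const_mul 2)
  convert h using 1
  · ext t; ring
  · ring

theorem cos_add_ne_one_of_mem_Ioo {α β : ℝ} (hα : α ∈ Set.Ioo 0 π) (hβ : β ∈ Set.Ioo 0 π) :
    cos (α + β) ≠ 1 := fun h => by
  have := (cos_eq_one_iff_of_lt_of_lt (by linarith [hα.1, hβ.1, pi_pos])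
    (by linarith [hα.2, hβ.2])).1 h
  linarith [hα.1, hβ.1]

theorem cos_sub_ne_one_of_mem_Ioo {α β : ℝ} (hα : α ∈ Set.Ioo 0 π) (hβ : β ∈ Set.Ioo 0 π)
    (hne : α ≠ β) : cos (α - β) ≠ 1 := fun h =>
  hne <| sub_eq_zero.1 <| (cos_eq_one_iff_of_lt_of_lt (by linarith [hα.1, hβ.2, pi_pos])
    (by linarith [hα.2, hβ.1, pi_pos])).1 h

theorem cos_two_mul_ne_one_of_mem_Ioo {α : ℝ} (hα : α ∈ Set.Ioo 0 π) : cos (2 * α) ≠ 1 :=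
  two_mul α ▸ cos_add_ne_one_of_mem_Ioo hα hα

theorem stmt12 (A0 B0 : ℝ) (hAB : A0 ^ 2 + B0 ^ 2 > 0)
    (α0 : ℝ) (hα0 : α0 ∈ Set.Ioo (0 : ℝ) Real.pi) :
    ∃ S : Set ℝ, S.Countable ∧
      (∀ α ∈ Set.Ioo (0 : ℝ) Real.pi, α ∉ S → ∀ A B : ℝ,
        (α = α0 →
          Tendsto (fun n : ℕ => (1 / (n : ℝ)) * ∑ t ∈ Finset.Icc 1 n,
              (A0 * Real.cos (α0 * t) + B0 * Real.sin (α0 * t)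
                - A * Real.cos (α * t) - B * Real.sin (α * t)) ^ 2)
            atTop (nhds (((A0 - A) ^ 2 + (B0 - B) ^ 2) / 2))) ∧
        (α ≠ α0 →
          Tendsto (fun n : ℕ => (1 / (n : ℝ)) * ∑ t ∈ Finset.Icc 1 n,
              (A0 * Real.cos (α0 * t) + B0 * Real.sin (α0 * t)
                - A * Real.cos (α * t) - B * Real.sin (α * t)) ^ 2)
            atTop (nhds ((A0 ^ 2 + B0 ^ 2 + A ^ 2 + B ^ 2) / 2)))) ∧
      (∀ c > (0 : ℝ), ∃ δ > (0 : ℝ), ∀ α ∈ Set.Ioo (0 : ℝ) Real.pi, α ∉ S → ∀ A B : ℝ,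
        (c ≤ |A - A0| ∨ c ≤ |B - B0|) → ∀ L : ℝ,
        Tendsto (fun n : ℕ => (1 / (n : ℝ)) * ∑ t ∈ Finset.Icc 1 n,
            (A0 * Real.cos (α0 * t) + B0 * Real.sin (α0 * t)
              - A * Real.cos (α * t) - B * Real.sin (α * t)) ^ 2)
          atTop (nhds L) → δ ≤ L) := by
  have hsame := fun {α : ℝ} (hα : α ∈ Set.Ioo 0 π) (A B : ℝ) =>
    hasCesaroMean_sq_sub_harmonic_same_freq (cos_two_mul_ne_one_of_mem_Ioo hα) A0 B0 A B
  have hdiff := fun {α : ℝ} (hα : α ∈ Set.Ioo 0 π) (hne : α ≠ α0) (A B : ℝ) =>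
    hasCesaroMean_sq_sub_harmonic (cos_two_mul_ne_one_of_mem_Ioo hα0)
      (cos_two_mul_ne_one_of_mem_Ioo hα) (cos_sub_ne_one_of_mem_Ioo hα0 hα hne.symm)
      (cos_add_ne_one_of_mem_Ioo hα0 hα) A0 B0 A B
  refine ⟨∅, Set.countable_empty,
    fun α hα _ A B => ⟨by rintro rfl; exact hsame hα A B, fun hne => hdiff hα hne A B⟩,
    fun c hc => ⟨min (c ^ 2 / 2) ((A0 ^ 2 + B0 ^ 2) / 2),
      lt_min (by positivity) (half_pos hAB), ?_⟩⟩
  rintro α hα - A B hfar L hL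
  rcases eq_or_ne α α0 with rfl | hne
  · rw [tendsto_nhds_unique hL (hsame hα A B)]
    have hc_sq : c ^ 2 ≤ (A0 - A) ^ 2 + (B0 - B) ^ 2 := by
      rcases hfar with h | h
      · nlinarith [sq_le_sq.2 (by rwa [abs_of_pos hc] : |c| ≤ |A - A0|), sq_nonneg (B0 - B)]
      · nlinarith [sq_le_sq.2 (by rwa [abs_of_pos hc] : |c| ≤ |B - B0|), sq_nonneg (A0 - A)]
    exact (min_le_left _ _).trans (by linarith)
  · rw [tendsto_nhds_unique hL (hdiff hα hne A B)]
    exact (min_le_right _ _).trans (by nlinarith [sq_nonneg A, sq_nonneg B])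
end
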